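/- Let e0, e1, e2 ∈ ℚ be pairwise distinct, let E be the elliptic curve y² = (x−e0)(x−e1)(x−e2) over ℚ, and let P = (x0, y0) be a rational affine point on E. Then there exists a rational point Q on E with 2·Q = P if and only if x0 − e0, x0 − e1, and x0 − e2 are all squares of rational numbers. -/

import Mathlib

/-!
If `2Q = P` with `Q = (x, y)`, then `y ≠ 0` and the duplication formula gives
`x(2Q) - eᵢ = (((x - eᵢ)² - (eⱼ - eᵢ)(eₖ - eᵢ)) / 2y)²`, so each `x₀ - eᵢ` is a square.
Conversely, if `a² = x₀ - e₀`, `b² = x₀ - e₁`, `c² = x₀ - e₂`, with the sign of `a` chosen so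
that `abc = y₀`, then `Q = (x₀ + ab + ac + bc, (a + b)(a + c)(b + c))` lies on the curve, its
tangent has slope `a + b + c`, and `2Q = P`. Distinctness of the roots makes `a + b`, `a + c`,
`b + c` nonzero, so `Q` is not a point of order two.
-/

open WeierstrassCurve.Affine

lemma add_ne_zero_of_sq_eq_sub {R : Type*} [CommRing R] {x e e' a b : R}
    (ha : a ^ 2 = x - e) (hb : b ^ 2 = x - e') (he : e ≠ e') : a + b ≠ 0 :=
  fun hab => he (by linear_combination ha - hb - (a - b) * hab)

namespace WeierstrassCurve.Affine

section CommRing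

variable {R : Type*} [CommRing R] {e₀ e₁ e₂ x y : R}

lemma nonsingular_of_Y_ne_negY {W : Affine R} (h : W.Equation x y) (hy : y ≠ W.negY x y) :
    W.Nonsingular x y :=
  (nonsingular_iff x y).mpr ⟨h, Or.inr hy⟩

@[simps]
def ofRoots (e₀ e₁ e₂ : R) : Affine R :=
  ⟨0, -(e₀ + e₁ + e₂), 0, e₀ * e₁ + e₀ * e₂ + e₁ * e₂, -(e₀ * e₁ * e₂)⟩

lemma ofRoots_equation_iff :
    (ofRoots e₀ e₁ e₂).Equation x y ↔ y ^ 2 = (x - e₀) * (x - e₁) * (x - e₂) := by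
  rw [equation_iff]
  simp only [ofRoots_a₁, ofRoots_a₂, ofRoots_a₃, ofRoots_a₄, ofRoots_a₆]
  constructor <;> intro h <;> linear_combination h

lemma ofRoots_negY : (ofRoots e₀ e₁ e₂).negY x y = -y := by
  simp [negY]

lemma ofRoots_comm₀₁ : ofRoots e₀ e₁ e₂ = ofRoots e₁ e₀ e₂ := by
  unfold ofRoots
  congr 1 <;> ring

lemma ofRoots_comm₀₂ : ofRoots e₀ e₁ e₂ = ofRoots e₂ e₁ e₀ := by
  unfold ofRoots
  congr 1 <;> ring

lemma ofRoots_exists_sq_mul_eq [NoZeroDivisors R] {x₀ y₀ a b c : R}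
    (h : (ofRoots e₀ e₁ e₂).Equation x₀ y₀)
    (ha : a ^ 2 = x₀ - e₀) (hb : b ^ 2 = x₀ - e₁) (hc : c ^ 2 = x₀ - e₂) :
    ∃ a', a' ^ 2 = x₀ - e₀ ∧ a' * b * c = y₀ := by
  rw [ofRoots_equation_iff] at h
  have hsq : (a * b * c) ^ 2 = y₀ ^ 2 := by rw [mul_pow, mul_pow, ha, hb, hc, h]
  rcases sq_eq_sq_iff_eq_or_eq_neg.mp hsq with habc | habc
  · exact ⟨a, ha, habc⟩
  · exact ⟨-a, by rwa [neg_sq], by linear_combination -habc⟩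

end CommRing

variable {F : Type*} [Field F] [DecidableEq F]

lemma Point.exists_of_two_nsmul_eq_some {W : Affine F} {x₀ y₀ : F}
    {hP : W.Nonsingular x₀ y₀} {Q : W.Point} (hQ : 2 • Q = some _ _ hP) :
    ∃ x y, W.Equation x y ∧ y ≠ W.negY x y ∧ W.addX x x (W.slope x x y y) = x₀ := by
  rcases Q with _ | @⟨x, y, h⟩
  · exact absurd ((smul_zero 2).symm.trans hQ).symm (some_ne_zero hP)
  rw [two_nsmul] at hQ
  by_cases hy : y = W.negY x y
  · exact absurd (add_self_of_Y_eq hy ▸ hQ).symm (some_ne_zero hP)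
  · rw [add_self_of_Y_ne hy, some.injEq] at hQ
    exact ⟨x, y, h.1, hy, hQ.1⟩

variable {e₀ e₁ e₂ : F}

lemma ofRoots_addX_slope_sub_eq_sq {x y : F} (h : (ofRoots e₀ e₁ e₂).Equation x y)
    (hy : y ≠ (ofRoots e₀ e₁ e₂).negY x y) :
    (ofRoots e₀ e₁ e₂).addX x x ((ofRoots e₀ e₁ e₂).slope x x y y) - e₀ =
      (((x - e₀) ^ 2 - (e₁ - e₀) * (e₂ - e₀)) / (2 * y)) ^ 2 := by
  rw [slope_of_Y_ne rfl hy, ofRoots_negY, sub_neg_eq_add, ← two_mul]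
  rw [ofRoots_negY] at hy
  rw [ofRoots_equation_iff] at h
  have hy0 : y ≠ 0 := fun h0 => hy (by rw [h0, neg_zero])
  have h2 : (2 : F) ≠ 0 := fun h0 => hy (by linear_combination y * h0)
  simp only [addX, ofRoots_a₁, ofRoots_a₂, ofRoots_a₄]
  field_simp
  linear_combination (-4 * (2 * x - e₁ - e₂)) * h

theorem ofRoots_exists_sq_of_two_nsmul_eq_some {x₀ y₀ : F}
    {hP : (ofRoots e₀ e₁ e₂).Nonsingular x₀ y₀} {Q : (ofRoots e₀ e₁ e₂).Point}
    (hQ : 2 • Q = Point.some _ _ hP) :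
    (∃ a, a ^ 2 = x₀ - e₀) ∧ (∃ b, b ^ 2 = x₀ - e₁) ∧ (∃ c, c ^ 2 = x₀ - e₂) := by
  obtain ⟨x, y, h, hy, rfl⟩ := Point.exists_of_two_nsmul_eq_some hQ
  refine ⟨⟨_, (ofRoots_addX_slope_sub_eq_sq h hy).symm⟩, ?_, ?_⟩
  · rw [ofRoots_comm₀₁] at h hy ⊢
    exact ⟨_, (ofRoots_addX_slope_sub_eq_sq h hy).symm⟩
  · rw [ofRoots_comm₀₂] at h hy ⊢
    exact ⟨_, (ofRoots_addX_slope_sub_eq_sq h hy).symm⟩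

theorem ofRoots_exists_two_nsmul_eq_some {x₀ a b c : F} (h2 : (2 : F) ≠ 0)
    (ha : a ^ 2 = x₀ - e₀) (hb : b ^ 2 = x₀ - e₁) (hc : c ^ 2 = x₀ - e₂)
    (h01 : e₀ ≠ e₁) (h02 : e₀ ≠ e₂) (h12 : e₁ ≠ e₂)
    (hP : (ofRoots e₀ e₁ e₂).Nonsingular x₀ (a * b * c)) :
    ∃ Q : (ofRoots e₀ e₁ e₂).Point, 2 • Q = Point.some _ _ hP := by
  have h2y : 2 * ((a + b) * (a + c) * (b + c)) ≠ 0 :=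
    mul_ne_zero h2 <| mul_ne_zero (mul_ne_zero (add_ne_zero_of_sq_eq_sub ha hb h01)
      (add_ne_zero_of_sq_eq_sub ha hc h02)) (add_ne_zero_of_sq_eq_sub hb hc h12)
  obtain rfl : e₀ = x₀ - a ^ 2 := by linear_combination ha
  obtain rfl : e₁ = x₀ - b ^ 2 := by linear_combination hb
  obtain rfl : e₂ = x₀ - c ^ 2 := by linear_combination hc
  set x := x₀ + a * b + a * c + b * c
  set y := (a + b) * (a + c) * (b + c)
  have hy : y ≠ (ofRoots (x₀ - a ^ 2) (x₀ - b ^ 2) (x₀ - c ^ 2)).negY x y := by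
    rw [ofRoots_negY]
    exact fun h => h2y (by linear_combination h)
  have hQ := nonsingular_of_Y_ne_negY (ofRoots_equation_iff.mpr (by ring)) hy
  have hslope :
      (ofRoots (x₀ - a ^ 2) (x₀ - b ^ 2) (x₀ - c ^ 2)).slope x x y y = a + b + c := by
    rw [slope_of_Y_ne rfl hy, ofRoots_negY, sub_neg_eq_add, ← two_mul, div_eq_iff h2y]
    simp only [ofRoots_a₁, ofRoots_a₂, ofRoots_a₄]
    ring
  refine ⟨Point.some _ _ hQ, ?_⟩
  rw [two_nsmul, Point.add_self_of_Y_ne hy, Point.some.injEq]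
  simp only [addY, negAddY, addX, hslope, ofRoots_negY, ofRoots_a₁, ofRoots_a₂]
  constructor <;> ring

end WeierstrassCurve.Affine

/-- Corollary 2: a rational affine point `P = (x0, y0)` on `y² = (x-e0)(x-e1)(x-e2)` is
twice a rational point if and only if `x0 - e0`, `x0 - e1`, `x0 - e2` are all rational
squares. -/
theorem halving_rational_iff_squares (e0 e1 e2 : ℚ)
    (h01 : e0 ≠ e1) (h02 : e0 ≠ e2) (h12 : e1 ≠ e2)
    (W : WeierstrassCurve.Affine ℚ)
    (hW : W = ⟨0, -(e0 + e1 + e2), 0, e0 * e1 + e0 * e2 + e1 * e2, -(e0 * e1 * e2)⟩)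
    (x0 y0 : ℚ) (hP : W.Nonsingular x0 y0) :
    (∃ Q : W.Point, 2 • Q = Point.some _ _ hP) ↔
      (∃ a : ℚ, a ^ 2 = x0 - e0) ∧ (∃ b : ℚ, b ^ 2 = x0 - e1) ∧ (∃ c : ℚ, c ^ 2 = x0 - e2) := by
  subst hW
  refine ⟨fun ⟨_, hQ⟩ => ofRoots_exists_sq_of_two_nsmul_eq_some hQ, ?_⟩
  rintro ⟨⟨a, ha⟩, ⟨b, hb⟩, ⟨c, hc⟩⟩
  obtain ⟨a, ha, rfl⟩ := ofRoots_exists_sq_mul_eq hP.1 ha hb hc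
  exact ofRoots_exists_two_nsmul_eq_some two_ne_zero ha hb hc h01 h02 h12 hP
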